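/- Let m ≥ 3 be an integer and let i be an integer with 1 < i < m. Then ∫_{(0,∞)^m} (λ_1/(λ_1−λ_i)) e^{−λ_m} 𝓘(λ) dλ = (1/2) ∫_{(0,∞)^m} e^{−λ_m} 𝓘(λ) dλ, where both integrals are finite. -/

import Mathlib

/-!
Swapping the coordinates `λ₁` and `λᵢ` preserves Lebesgue measure, the orthant, `e^{-λₘ}` and
`𝓘`, and turns `λ₁ / (λ₁ - λᵢ)` into `λᵢ / (λᵢ - λ₁)`; the two ratios add up to `1` off the
hyperplane `λ₁ = λᵢ`, where `𝓘` vanishes. So the left integral is half the right one.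
Integrability: `|Δ(λ)|` contains the factor `|λ₁ - λᵢ|`, which cancels the denominator, and what
is left is bounded by `∏ⱼ (1 + λⱼ)^N e^{-λⱼ}`.
-/

open MeasureTheory Finset

lemma integrableOn_one_add_pow_mul_exp_neg (n : ℕ) :
    IntegrableOn (fun t : ℝ => (1 + t) ^ n * Real.exp (-t)) (Set.Ioi 0) := by
  have hpow (k : ℕ) : IntegrableOn (fun t : ℝ => t ^ k * Real.exp (-t)) (Set.Ioi 0) := by
    simpa [Real.rpow_natCast, mul_comm] using
      Real.GammaIntegral_convergent (s := k + 1) (by positivity)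
  simp_rw [add_comm (1 : ℝ), add_pow, one_pow, mul_one, sum_mul, mul_assoc]
  exact integrable_finsetSum _ fun k _ => by
    simpa only [mul_left_comm] using (hpow k).const_mul (n.choose k : ℝ)

lemma integrableOn_prod_one_add_pow_mul_exp_neg {ι : Type*} [Fintype ι] (n : ℕ) :
    IntegrableOn (fun x : ι → ℝ => ∏ j, ((1 + x j) ^ n * Real.exp (-x j)))
      (Set.univ.pi fun _ => Set.Ioi 0) := by
  rw [IntegrableOn, volume_pi, Measure.restrict_pi_pi]
  exact Integrable.fintype_prod fun _ => integrableOn_one_add_pow_mul_exp_neg n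

section Symmetrization

variable {ι α : Type*}

lemma measurableEmbedding_comp_perm [MeasurableSpace α] (σ : Equiv.Perm ι) :
    MeasurableEmbedding (fun x : ι → α => x ∘ σ) :=
  (MeasurableEquiv.arrowCongr' σ.symm (MeasurableEquiv.refl α)).measurableEmbedding

lemma preimage_comp_perm_univ_pi (σ : Equiv.Perm ι) (A : Set α) :
    (fun x : ι → α => x ∘ σ) ⁻¹' Set.univ.pi (fun _ => A) = Set.univ.pi fun _ => A := by
  ext x
  simp only [Set.mem_preimage, Set.mem_univ_pi, Function.comp_apply]
  exact ⟨fun h i => by simpa using h (σ.symm i), fun h i => h (σ i)⟩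

variable [Fintype ι]

lemma measurePreserving_comp_perm [MeasureSpace α] [SigmaFinite (volume : Measure α)]
    (σ : Equiv.Perm ι) : MeasurePreserving (fun x : ι → α => x ∘ σ) := by
  convert volume_preserving_arrowCongr' σ.symm (MeasurableEquiv.refl α) (.id _) using 1
  ext x j
  rfl

variable [DecidableEq ι]

theorem integral_div_sub_mul_eq_half {A : Set ℝ} {w : (ι → ℝ) → ℝ} {z k : ι}
    (hw_swap : ∀ x, w (x ∘ Equiv.swap z k) = w x) (hw_zero : ∀ x, x z = x k → w x = 0)
    (hint : IntegrableOn (fun x => x z / (x z - x k) * w x) (Set.univ.pi fun _ => A)) :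
    IntegrableOn w (Set.univ.pi fun _ => A) ∧
      ∫ x in Set.univ.pi (fun _ => A), x z / (x z - x k) * w x =
        1 / 2 * ∫ x in Set.univ.pi (fun _ => A), w x := by
  let f x := x z / (x z - x k) * w x
  let T := fun x : ι → ℝ => x ∘ Equiv.swap z k
  have hT := measurePreserving_comp_perm (α := ℝ) (Equiv.swap z k)
  have hTemb := measurableEmbedding_comp_perm (α := ℝ) (Equiv.swap z k)
  have hTS := preimage_comp_perm_univ_pi (Equiv.swap z k) A
  have hsum : ∀ x, f x + f (T x) = w x := by
    intro x
    simp only [f, T, Function.comp_apply, Equiv.swap_apply_left, Equiv.swap_apply_right, hw_swap]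
    by_cases h : x z = x k
    · simp [hw_zero x h]
    · have h' : x z - x k ≠ 0 := sub_ne_zero.mpr h
      have h'' : x k - x z ≠ 0 := sub_ne_zero.mpr (Ne.symm h)
      field_simp
      ring
  have hintT : IntegrableOn (fun x => f (T x)) (Set.univ.pi fun _ => A) := by
    have := (hT.integrableOn_comp_preimage hTemb (f := f)).mpr hint
    rwa [hTS] at this
  have hintegral_T : ∫ x in Set.univ.pi (fun _ => A), f (T x) =
      ∫ x in Set.univ.pi (fun _ => A), f x := by
    have := hT.setIntegral_preimage_emb hTemb f (Set.univ.pi fun _ => A)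
    rwa [hTS] at this
  have hw : (fun x => f x + f (T x)) = w := funext hsum
  refine ⟨hw ▸ hint.add hintT, ?_⟩
  calc ∫ x in Set.univ.pi (fun _ => A), f x
      = 1 / 2 * ((∫ x in Set.univ.pi (fun _ => A), f x) +
          ∫ x in Set.univ.pi (fun _ => A), f (T x)) := by rw [hintegral_T]; ring
    _ = 1 / 2 * ∫ x in Set.univ.pi (fun _ => A), w x := by rw [← integral_add hint hintT, hw]

end Symmetrization

section OneAddProd

variable {ι : Type*} [Fintype ι] {x : ι → ℝ}

lemma one_le_prod_one_add (hx : ∀ j, 0 ≤ x j) : 1 ≤ ∏ j, (1 + x j) :=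
  one_le_prod fun j _ => le_add_of_nonneg_right (hx j)

lemma le_prod_one_add (hx : ∀ j, 0 ≤ x j) (i : ι) : x i ≤ ∏ j, (1 + x j) := by
  classical
  calc x i ≤ ∏ j ∈ {i}, (1 + x j) := by simp
    _ ≤ ∏ j, (1 + x j) := prod_le_prod_of_subset_of_one_le (subset_univ _)
        (fun j _ => by linarith [hx j]) fun j _ _ => le_add_of_nonneg_right (hx j)

lemma abs_sub_le_prod_one_add (hx : ∀ j, 0 ≤ x j) (p q : ι) : |x p - x q| ≤ ∏ j, (1 + x j) :=
  abs_sub_le_of_nonneg_of_le (hx p) (le_prod_one_add hx p) (hx q) (le_prod_one_add hx q)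

end OneAddProd

section Vandermonde

variable {m : ℕ}

lemma abs_prod_Ioi_sub_eq_abs_det_vandermonde {R : Type*} [CommRing R] [LinearOrder R]
    [IsStrictOrderedRing R] (x : Fin m → R) :
    |∏ i : Fin m, ∏ j ∈ Ioi i, (x i - x j)| = |(Matrix.vandermonde x).det| := by
  rw [Matrix.det_vandermonde, abs_prod, abs_prod]
  refine prod_congr rfl fun i _ => ?_
  rw [abs_prod, abs_prod]
  exact prod_congr rfl fun j _ => abs_sub_comm _ _

lemma abs_det_vandermonde_comp_perm {R : Type*} [CommRing R] [LinearOrder R]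
    [IsStrictOrderedRing R] (σ : Equiv.Perm (Fin m)) (x : Fin m → R) :
    |(Matrix.vandermonde (x ∘ σ)).det| = |(Matrix.vandermonde x).det| := by
  have : Matrix.vandermonde (x ∘ σ) = (Matrix.vandermonde x).submatrix σ id := rfl
  rw [this, Matrix.det_permute, abs_mul, abs_unit_intCast, one_mul]

lemma abs_prod_Ioi_sub_le {x : Fin m → ℝ} (hx : ∀ j, 0 ≤ x j) {z k : Fin m} (hzk : z ≠ k) :
    |∏ i : Fin m, ∏ j ∈ Ioi i, (x i - x j)| ≤ |x z - x k| * (∏ j, (1 + x j)) ^ (m * m) := by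
  set P := ∏ j, (1 + x j)
  obtain ⟨pq, hpq, hpq_abs⟩ : ∃ pq ∈ univ.sigma fun i : Fin m => Ioi i,
      |x pq.1 - x pq.2| = |x z - x k| := by
    rcases hzk.lt_or_gt with h | h
    · exact ⟨⟨z, k⟩, by simpa using h, rfl⟩
    · exact ⟨⟨k, z⟩, by simpa using h, abs_sub_comm _ _⟩
  have hcard : #((univ.sigma fun i : Fin m => Ioi i).erase pq) ≤ m * m :=
    (card_le_univ _).trans_eq (by simp)
  calc |∏ i : Fin m, ∏ j ∈ Ioi i, (x i - x j)|
      = ∏ pq ∈ univ.sigma fun i : Fin m => Ioi i, |x pq.1 - x pq.2| := by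
        rw [prod_sigma, abs_prod]
        simp_rw [abs_prod]
    _ = |x z - x k| * ∏ pq ∈ (univ.sigma fun i : Fin m => Ioi i).erase pq, |x pq.1 - x pq.2| := by
        rw [← mul_prod_erase _ _ hpq, hpq_abs]
    _ ≤ |x z - x k| * P ^ #((univ.sigma fun i : Fin m => Ioi i).erase pq) := by
        gcongr
        exact (prod_le_prod (fun _ _ => abs_nonneg _) fun pq _ =>
          abs_sub_le_prod_one_add hx _ _).trans_eq (prod_const P)
    _ ≤ |x z - x k| * P ^ (m * m) := by
        gcongr
        exact one_le_prod_one_add hx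

end Vandermonde

section LaguerreWeight

variable {m : ℕ}

/-- The weight `𝓘(λ)`. -/
noncomputable def laguerreWeight (x : Fin m → ℝ) : ℝ :=
  |∏ i : Fin m, ∏ j ∈ Ioi i, (x i - x j)| * ∏ j : Fin m, (x j * Real.exp (-x j))

lemma laguerreWeight_comp_perm (σ : Equiv.Perm (Fin m)) (x : Fin m → ℝ) :
    laguerreWeight (x ∘ σ) = laguerreWeight x := by
  rw [laguerreWeight, laguerreWeight, abs_prod_Ioi_sub_eq_abs_det_vandermonde,
    abs_prod_Ioi_sub_eq_abs_det_vandermonde, abs_det_vandermonde_comp_perm]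
  congr 1
  exact Equiv.prod_comp σ fun j => x j * Real.exp (-x j)

lemma laguerreWeight_eq_zero {x : Fin m → ℝ} {z k : Fin m} (hzk : z ≠ k) (h : x z = x k) :
    laguerreWeight x = 0 := by
  rw [laguerreWeight, abs_prod_Ioi_sub_eq_abs_det_vandermonde,
    Matrix.det_vandermonde_eq_zero_iff.mpr ⟨z, k, h, hzk⟩, abs_zero, zero_mul]

lemma abs_div_sub_mul_laguerreWeight_le {x : Fin m → ℝ} (hx : ∀ j, 0 ≤ x j) {z k : Fin m}
    (hzk : z ≠ k) :
    |x z / (x z - x k) * laguerreWeight x| ≤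
      ∏ j, ((1 + x j) ^ (m * m + 2) * Real.exp (-x j)) := by
  set P := ∏ j, (1 + x j)
  have hP : 0 ≤ P := zero_le_one.trans (one_le_prod_one_add hx)
  have hdiag_nonneg : 0 ≤ ∏ j, (x j * Real.exp (-x j)) :=
    prod_nonneg fun j _ => mul_nonneg (hx j) (Real.exp_pos _).le
  have hratio : |x z / (x z - x k)| * |∏ i : Fin m, ∏ j ∈ Ioi i, (x i - x j)| ≤
      P ^ (m * m + 1) := by
    have hcancel : |x z / (x z - x k) * (x z - x k)| ≤ x z := by
      rcases eq_or_ne (x z - x k) 0 with h | h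
      · simp [h, hx z]
      · rw [div_mul_cancel₀ _ h, abs_of_nonneg (hx z)]
    calc |x z / (x z - x k)| * |∏ i : Fin m, ∏ j ∈ Ioi i, (x i - x j)|
        ≤ |x z / (x z - x k)| * (|x z - x k| * P ^ (m * m)) := by
          gcongr
          exact abs_prod_Ioi_sub_le hx hzk
      _ ≤ P * P ^ (m * m) := by
          rw [← mul_assoc, ← abs_mul]
          exact mul_le_mul_of_nonneg_right (hcancel.trans (le_prod_one_add hx z))
            (pow_nonneg hP _)
      _ = P ^ (m * m + 1) := by ring
  have hdiag : ∏ j, (x j * Real.exp (-x j)) ≤ P * ∏ j, Real.exp (-x j) := by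
    rw [prod_mul_distrib]
    gcongr
    exact prod_le_prod (fun j _ => hx j) fun j _ => le_add_of_nonneg_left zero_le_one
  calc |x z / (x z - x k) * laguerreWeight x|
      = |x z / (x z - x k)| * |∏ i : Fin m, ∏ j ∈ Ioi i, (x i - x j)| *
          ∏ j, (x j * Real.exp (-x j)) := by
        rw [laguerreWeight, abs_mul, abs_mul, abs_abs,
          abs_of_nonneg hdiag_nonneg, mul_assoc]
    _ ≤ P ^ (m * m + 1) * (P * ∏ j, Real.exp (-x j)) :=
        mul_le_mul hratio hdiag hdiag_nonneg (pow_nonneg hP _)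
    _ = ∏ j, ((1 + x j) ^ (m * m + 2) * Real.exp (-x j)) := by
        rw [prod_mul_distrib, prod_pow]
        ring

lemma integrableOn_div_sub_mul_exp_neg_mul_laguerreWeight {z k : Fin m} (hzk : z ≠ k)
    (l : Fin m) :
    IntegrableOn (fun x => x z / (x z - x k) * (Real.exp (-x l) * laguerreWeight x))
      (Set.univ.pi fun _ => Set.Ioi 0) := by
  refine (integrableOn_prod_one_add_pow_mul_exp_neg (m * m + 2)).mono' ?_ ?_
  · refine Measurable.aestronglyMeasurable ?_
    unfold laguerreWeight
    fun_prop
  · refine ae_restrict_of_forall_mem (MeasurableSet.univ_pi fun _ => measurableSet_Ioi)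
      fun x hx => ?_
    have hx' : ∀ j, 0 ≤ x j := fun j => (Set.mem_univ_pi.mp hx j).le
    calc ‖x z / (x z - x k) * (Real.exp (-x l) * laguerreWeight x)‖
        = Real.exp (-x l) * |x z / (x z - x k) * laguerreWeight x| := by
          rw [Real.norm_eq_abs, mul_left_comm, abs_mul, abs_of_pos (Real.exp_pos _)]
      _ ≤ 1 * ∏ j, ((1 + x j) ^ (m * m + 2) * Real.exp (-x j)) := by
          gcongr
          · exact Real.exp_le_one_iff.mpr (neg_nonpos.mpr (hx' l))
          · exact abs_div_sub_mul_laguerreWeight_le hx' hzk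
      _ = ∏ j, ((1 + x j) ^ (m * m + 2) * Real.exp (-x j)) := one_mul _

theorem integral_div_sub_mul_exp_neg_mul_laguerreWeight {z k l : Fin m} (hzk : z ≠ k)
    (hzl : z ≠ l) (hkl : k ≠ l) :
    IntegrableOn (fun x => x z / (x z - x k) * Real.exp (-x l) * laguerreWeight x)
        (Set.univ.pi fun _ => Set.Ioi 0) ∧
      IntegrableOn (fun x => Real.exp (-x l) * laguerreWeight x)
        (Set.univ.pi fun _ => Set.Ioi 0) ∧
      ∫ x in Set.univ.pi (fun _ => Set.Ioi 0),
          x z / (x z - x k) * Real.exp (-x l) * laguerreWeight x =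
        1 / 2 * ∫ x in Set.univ.pi (fun _ => Set.Ioi 0), Real.exp (-x l) * laguerreWeight x := by
  have hint := integrableOn_div_sub_mul_exp_neg_mul_laguerreWeight hzk l
  obtain ⟨hw, heq⟩ := integral_div_sub_mul_eq_half
    (w := fun x => Real.exp (-x l) * laguerreWeight x)
    (fun x => by simp [laguerreWeight_comp_perm, Equiv.swap_apply_of_ne_of_ne hzl.symm hkl.symm])
    (fun x h => by simp [laguerreWeight_eq_zero hzk h]) hint
  simp only [mul_assoc]
  exact ⟨hint, hw, heq⟩

end LaguerreWeight

theorem lemma_L5_N (m : ℕ) (i : ℕ) (hi1 : 1 < i) (him : i < m) :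
    IntegrableOn
      (fun lam : Fin m → ℝ =>
        lam ⟨0, by omega⟩ / (lam ⟨0, by omega⟩ - lam ⟨i - 1, by omega⟩) * Real.exp (-lam ⟨m - 1, by omega⟩) *
          (|∏ i : Fin m, ∏ j ∈ Finset.Ioi i, (lam i - lam j)| *
            ∏ j : Fin m, (lam j * Real.exp (-lam j))))
      (Set.univ.pi fun _ : Fin m => Set.Ioi (0 : ℝ)) volume ∧
    IntegrableOn
      (fun lam : Fin m → ℝ =>
        Real.exp (-lam ⟨m - 1, by omega⟩) *
          (|∏ i : Fin m, ∏ j ∈ Finset.Ioi i, (lam i - lam j)| *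
            ∏ j : Fin m, (lam j * Real.exp (-lam j))))
      (Set.univ.pi fun _ : Fin m => Set.Ioi (0 : ℝ)) volume ∧
    (∫ lam in (Set.univ.pi fun _ : Fin m => Set.Ioi (0 : ℝ)),
        lam ⟨0, by omega⟩ / (lam ⟨0, by omega⟩ - lam ⟨i - 1, by omega⟩) * Real.exp (-lam ⟨m - 1, by omega⟩) *
          (|∏ i : Fin m, ∏ j ∈ Finset.Ioi i, (lam i - lam j)| *
            ∏ j : Fin m, (lam j * Real.exp (-lam j)))) =
      1 / 2 *
        ∫ lam in (Set.univ.pi fun _ : Fin m => Set.Ioi (0 : ℝ)),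
          Real.exp (-lam ⟨m - 1, by omega⟩) *
          (|∏ i : Fin m, ∏ j ∈ Finset.Ioi i, (lam i - lam j)| *
            ∏ j : Fin m, (lam j * Real.exp (-lam j))) :=
  integral_div_sub_mul_exp_neg_mul_laguerreWeight (by rw [Ne, Fin.mk.injEq]; omega)
    (by rw [Ne, Fin.mk.injEq]; omega) (by rw [Ne, Fin.mk.injEq]; omega)
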